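/- (Summability of residual terms.) Under the standing assumption, let (x^{k+1}, ỹ^{k+1}, y^{k+1}), k = 0, 1, 2, …, be the SPIDA sequence started at (x^0, y^0) ∈ X × Y, let (x*, y*) be a saddle point of L, and set Ψ := ψ − (α‖AᵀA‖/(ϱμ)) φ (with φ the kernel on ℝ^n). Then B_Ψ(x^{k+1}, x^k) ≥ 0 for all k, and for every N: Σ_{k=0}^{N} [ γ B_φ(ỹ^{k+1}, y^k) + (γ − 1/(αϱ)) B_φ(y^{k+1}, ỹ^{k+1}) + μ B_Ψ(x^{k+1}, x^k) ] ≤ γ B_φ(y*, y^0) + μ B_ψ(x*, x^0). -/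

import Mathlib

noncomputable section
open scoped RealInnerProductSpace
open Filter

abbrev Euc (d : ℕ) : Type := EuclideanSpace ℝ (Fin d)

/-- Bregman distance associated with kernel `φ` whose gradient map is `φ'`. -/
def Breg {d : ℕ} (φ : Euc d → ℝ) (φ' : Euc d → Euc d) (x y : Euc d) : ℝ :=
  φ x - φ y - ⟪φ' y, x - y⟫

/-- The convex-concave Lagrangian `L(x,y) = f(x) + ⟨Ax, y⟩ − g(y)`. -/
def Lag {n m : ℕ} (f : Euc n → ℝ) (g : Euc m → ℝ) (A : Euc n →L[ℝ] Euc m)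
    (x : Euc n) (y : Euc m) : ℝ := f x + ⟪A x, y⟫ - g y

/-! Each SPIDA subproblem is a Bregman-proximal step, so its optimality condition yields the
three-point inequality `h z₁ + γ B(z₁, z₀) + γ B(z, z₁) ≤ h z + γ B(z, z₀)`. Adding these for the
three subproblems, tested at the next iterate and at the saddle point, and using the saddle
inequalities leaves only the cross term `⟪A (x^{k+1} - x^k), y^{k+1} - ỹ^{k+1}⟫`. Young's inequality
with weight `α`, `‖A u‖² ≤ ‖AᵀA‖ ‖u‖²` and `ϱ`-strong convexity of both kernels bound it by
`(α‖AᵀA‖/ϱ) B_φ(x^{k+1}, x^k) + (αϱ)⁻¹ B_φ(y^{k+1}, ỹ^{k+1})`, which is exactly what `B_Ψ` and the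
coefficient `γ - (αϱ)⁻¹` absorb. So `γ B_φ(y*, y^k) + μ B_ψ(x*, x^k)` decreases by the `k`-th
residual at each step, and the sum telescopes. `B_Ψ ≥ 0` because
`Ψ = L⁻¹ (Lψ - φ) + (L⁻¹ - α‖AᵀA‖/(ϱμ)) φ` is convex. -/

open Set InnerProductSpace

theorem ConvexOn.sub_div_mul_of_le_div {E : Type*} [AddCommGroup E] [Module ℝ E] {s : Set E}
    {ψ φ : E → ℝ} {L a b : ℝ} (ha : 0 < a) (hb : 0 ≤ b) (hL : 0 < L) (hLab : L ≤ a / b)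
    (hφ : ConvexOn ℝ s φ) (h : ConvexOn ℝ s (fun z => L * ψ z - φ z)) :
    ConvexOn ℝ s (fun z => ψ z - b / a * φ z) := by
  have hc : 0 ≤ L⁻¹ - b / a := by
    rw [sub_nonneg, div_le_iff₀ ha, inv_mul_eq_div, le_div_iff₀ hL]
    linarith [mul_le_of_le_div₀ ha.le hb hLab]
  refine ((h.smul (inv_nonneg.mpr hL.le)).add (hφ.smul hc)).congr fun z _ => ?_
  simp only [Pi.add_apply, smul_eq_mul]
  field_simp
  ring

section Gradient

variable {E : Type*} [NormedAddCommGroup E] [InnerProductSpace ℝ E] [CompleteSpace E]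
  {f g : E → ℝ} {f' g' x : E}

theorem HasGradientAt.sub (hf : HasGradientAt f f' x) (hg : HasGradientAt g g' x) :
    HasGradientAt (fun z => f z - g z) (f' - g') x := by
  rw [hasGradientAt_iff_hasFDerivAt] at *
  exact (hf.sub hg).congr_fderiv (map_sub _ _ _).symm

theorem HasGradientAt.const_mul (hf : HasGradientAt f f' x) (c : ℝ) :
    HasGradientAt (fun z => c * f z) (c • f') x := by
  rw [hasGradientAt_iff_hasFDerivAt] at *
  exact (hf.const_mul c).congr_fderiv (map_smul _ _ _).symm

theorem HasGradientAt.neg (hf : HasGradientAt f f' x) : HasGradientAt (-f) (-f') x := by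
  rw [hasGradientAt_iff_hasFDerivAt] at *
  exact hf.neg.congr_fderiv (map_neg _ _).symm

theorem hasGradientAt_norm_sq (x : E) : HasGradientAt (fun z => ‖z‖ ^ 2) ((2 : ℝ) • x) x := by
  rw [hasGradientAt_iff_hasFDerivAt]
  exact (hasStrictFDerivAt_norm_sq x).hasFDerivAt.congr_fderiv (by ext v; simp [two_smul])

theorem hasGradientAt_inner_sub (v y x : E) : HasGradientAt (fun z => ⟪v, z - y⟫) v x := by
  rw [hasGradientAt_iff_hasFDerivAt]
  have := ((innerSL ℝ v).hasFDerivAt (x := x)).sub_const ⟪v, y⟫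
  simp only [innerSL_apply_apply, ← inner_sub_right] at this
  exact this

theorem ConvexOn.sub_le_inner_of_isMinOn_add {s : Set E} {h k : E → ℝ} {G x₀ z : E}
    (hh : ConvexOn ℝ s h) (hk : HasGradientAt k G x₀) (hmin : IsMinOn (h + k) s x₀)
    (hx₀ : x₀ ∈ s) (hz : z ∈ s) : h x₀ - h z ≤ ⟪G, z - x₀⟫ := by
  refine ge_of_tendsto
    ((hasGradientAt_iff_hasFDerivAt.mp hk).hasLineDerivAt (z - x₀)).tendsto_slope_zero_right ?_
  filter_upwards [Ioc_mem_nhdsGT (zero_lt_one' ℝ)] with t ⟨ht₀, ht₁⟩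
  have hseg : x₀ + t • (z - x₀) = (1 - t) • x₀ + t • z := by module
  have hconv := hh.2 hx₀ hz (sub_nonneg.mpr ht₁) ht₀.le (sub_add_cancel 1 t)
  have hle := isMinOn_iff.mp hmin _
    (hseg ▸ hh.1 hx₀ hz (sub_nonneg.mpr ht₁) ht₀.le (sub_add_cancel 1 t))
  rw [← hseg, smul_eq_mul, smul_eq_mul] at hconv
  simp only [Pi.add_apply] at hle
  rw [smul_eq_mul, le_inv_mul_iff₀ ht₀]
  nlinarith

theorem ConvexOn.inner_le_sub_of_hasGradientAt {s : Set E} {y : E} (hf : ConvexOn ℝ s f)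
    (hg : HasGradientAt f f' x) (hx : x ∈ s) (hy : y ∈ s) : ⟪f', y - x⟫ ≤ f y - f x := by
  -- every point minimizes `f + -f = 0`
  have := hf.sub_le_inner_of_isMinOn_add hg.neg (by simp [isMinOn_iff]) hx hy
  rw [inner_neg_left] at this
  linarith

end Gradient

section Bregman

variable {d : ℕ} {φ χ : Euc d → ℝ} {φ' χ' : Euc d → Euc d} {a b : Euc d}

theorem hasGradientAt_breg_left (hφ : HasGradientAt φ (φ' a) a) (b : Euc d) :
    HasGradientAt (fun z => Breg φ φ' z b) (φ' a - φ' b) a := by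
  have := (hφ.sub (hasGradientAt_const a (φ b))).sub (hasGradientAt_inner_sub (φ' b) b a)
  rwa [sub_zero] at this

theorem breg_nonneg (hφ : ConvexOn ℝ univ φ) (hφ' : HasGradientAt φ (φ' b) b) (a : Euc d) :
    0 ≤ Breg φ φ' a b :=
  sub_nonneg.mpr (hφ.inner_le_sub_of_hasGradientAt hφ' trivial trivial)

theorem breg_sub_const_mul (c : ℝ) (a b : Euc d) :
    Breg (fun z => φ z - c * χ z) (fun z => φ' z - c • χ' z) a b
      = Breg φ φ' a b - c * Breg χ χ' a b := by
  simp only [Breg, inner_sub_left, real_inner_smul_left]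
  ring

theorem breg_norm_sq (a b : Euc d) :
    Breg (fun z => ‖z‖ ^ 2) (fun z => (2 : ℝ) • z) a b = ‖a - b‖ ^ 2 := by
  simp only [Breg, norm_sub_sq_real, real_inner_smul_left, inner_sub_right,
    real_inner_self_eq_norm_sq, real_inner_comm a b]
  ring

theorem half_mul_norm_sub_sq_le_breg {ϱ : ℝ} (hφ : HasGradientAt φ (φ' b) b)
    (hsc : ConvexOn ℝ univ (fun z => φ z - ϱ / 2 * ‖z‖ ^ 2)) (a : Euc d) :
    ϱ / 2 * ‖a - b‖ ^ 2 ≤ Breg φ φ' a b := by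
  have := breg_nonneg (φ' := fun z => φ' z - (ϱ / 2) • (2 : ℝ) • z) hsc
    (hφ.sub ((hasGradientAt_norm_sq b).const_mul (ϱ / 2))) a
  rw [breg_sub_const_mul, breg_norm_sq] at this
  linarith

theorem breg_three_point {s : Set (Euc d)} {h : Euc d → ℝ} {γ : ℝ} {z₀ z₁ z : Euc d}
    (hφ : HasGradientAt φ (φ' z₁) z₁) (hh : ConvexOn ℝ s h)
    (hmin : IsMinOn (fun z => h z + γ * Breg φ φ' z z₀) s z₁) (hz₁ : z₁ ∈ s) (hz : z ∈ s) :
    h z₁ + γ * Breg φ φ' z₁ z₀ + γ * Breg φ φ' z z₁ ≤ h z + γ * Breg φ φ' z z₀ := by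
  have := hh.sub_le_inner_of_isMinOn_add ((hasGradientAt_breg_left hφ z₀).const_mul γ)
    hmin hz₁ hz
  have hid : Breg φ φ' z z₀ - Breg φ φ' z₁ z₀ - Breg φ φ' z z₁ = ⟪φ' z₁ - φ' z₀, z - z₁⟫ := by
    simp only [Breg, inner_sub_left, inner_sub_right]
    ring
  rw [real_inner_smul_left, ← hid] at this
  linarith

end Bregman

theorem inner_apply_le_young {E F : Type*} [NormedAddCommGroup E] [InnerProductSpace ℝ E]
    [CompleteSpace E] [NormedAddCommGroup F] [InnerProductSpace ℝ F] [CompleteSpace F]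
    (A : E →L[ℝ] F) {α : ℝ} (hα : 0 < α) (u : E) (v : F) :
    ⟪A u, v⟫ ≤ α * ‖(ContinuousLinearMap.adjoint A).comp A‖ / 2 * ‖u‖ ^ 2
      + 1 / (2 * α) * ‖v‖ ^ 2 := by
  rw [ContinuousLinearMap.norm_adjoint_comp_self]
  have hCS : ⟪A u, v⟫ ≤ ‖A‖ * ‖u‖ * ‖v‖ :=
    (real_inner_le_norm _ _).trans (mul_le_mul_of_nonneg_right (A.le_opNorm u) (norm_nonneg v))
  have hsq : 0 ≤ (α * (‖A‖ * ‖u‖) - ‖v‖) ^ 2 / (2 * α) := by positivity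
  have hexp : (α * (‖A‖ * ‖u‖) - ‖v‖) ^ 2 / (2 * α)
      = α * (‖A‖ * ‖A‖) / 2 * ‖u‖ ^ 2 + 1 / (2 * α) * ‖v‖ ^ 2 - ‖A‖ * ‖u‖ * ‖v‖ := by
    field_simp
    ring
  linarith

theorem inner_apply_sub_le_breg {n m : ℕ} (A : Euc n →L[ℝ] Euc m) {α ϱ : ℝ} (hα : 0 < α)
    (hϱ : 0 < ϱ) {φ : Euc m → ℝ} {φ' : Euc m → Euc m} {χ : Euc n → ℝ} {χ' : Euc n → Euc n}
    {x₀ x₁ : Euc n} {y₀ y₁ : Euc m} (hφ : HasGradientAt φ (φ' y₀) y₀)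
    (hφsc : ConvexOn ℝ univ (fun z => φ z - ϱ / 2 * ‖z‖ ^ 2)) (hχ : HasGradientAt χ (χ' x₀) x₀)
    (hχsc : ConvexOn ℝ univ (fun z => χ z - ϱ / 2 * ‖z‖ ^ 2)) :
    ⟪A (x₁ - x₀), y₁ - y₀⟫ ≤ α * ‖(ContinuousLinearMap.adjoint A).comp A‖ / ϱ * Breg χ χ' x₁ x₀
      + 1 / (α * ϱ) * Breg φ φ' y₁ y₀ := by
  have hx := half_mul_norm_sub_sq_le_breg hχ hχsc x₁
  have hy := half_mul_norm_sub_sq_le_breg hφ hφsc y₁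
  calc ⟪A (x₁ - x₀), y₁ - y₀⟫
      ≤ α * ‖(ContinuousLinearMap.adjoint A).comp A‖ / 2 * ‖x₁ - x₀‖ ^ 2
        + 1 / (2 * α) * ‖y₁ - y₀‖ ^ 2 := inner_apply_le_young A hα _ _
    _ = α * ‖(ContinuousLinearMap.adjoint A).comp A‖ / ϱ * (ϱ / 2 * ‖x₁ - x₀‖ ^ 2)
        + 1 / (α * ϱ) * (ϱ / 2 * ‖y₁ - y₀‖ ^ 2) := by
      field_simp
    _ ≤ _ := by gcongr

theorem sum_range_add_le_of_add_le {T D : ℕ → ℝ} (h : ∀ k, T k + D (k + 1) ≤ D k) (N : ℕ) :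
    ∑ k ∈ Finset.range N, T k + D N ≤ D 0 := by
  have := Finset.sum_le_sum fun k (_ : k ∈ Finset.range N) => le_sub_iff_add_le.mpr (h k)
  rw [Finset.sum_range_sub'] at this
  linarith

theorem spida_step_le {n m : ℕ} {X : Set (Euc n)} {Y : Set (Euc m)} (hX : Convex ℝ X)
    (hY : Convex ℝ Y) {f : Euc n → ℝ} {g : Euc m → ℝ} (hf : ConvexOn ℝ X f)
    (hg : ConvexOn ℝ Y g) {A : Euc n →L[ℝ] Euc m} {γ μ : ℝ} {φ : Euc m → ℝ}
    {φ' : Euc m → Euc m} {ψ : Euc n → ℝ} {ψ' : Euc n → Euc n}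
    (hφ : ∀ z, HasGradientAt φ (φ' z) z) (hψ : ∀ z, HasGradientAt ψ (ψ' z) z)
    {x₀ x₁ xs : Euc n} {y₀ yt y₁ ys : Euc m} (hx₁ : x₁ ∈ X) (hyt : yt ∈ Y) (hy₁ : y₁ ∈ Y)
    (hxs : xs ∈ X) (hys : ys ∈ Y)
    (hytmin : IsMinOn (fun z => g z - ⟪A x₀, z⟫ + γ * Breg φ φ' z y₀) Y yt)
    (hx₁min : IsMinOn (fun z => f z + ⟪A z, yt⟫ + μ * Breg ψ ψ' z x₀) X x₁)
    (hy₁min : IsMinOn (fun z => g z - ⟪A x₁, z⟫ + γ * Breg φ φ' z y₀) Y y₁)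
    (hsaddle : Lag f g A xs yt ≤ Lag f g A x₁ ys) :
    γ * Breg φ φ' yt y₀ + γ * Breg φ φ' y₁ yt + μ * Breg ψ ψ' x₁ x₀
        + (γ * Breg φ φ' ys y₁ + μ * Breg ψ ψ' xs x₁)
      ≤ γ * Breg φ φ' ys y₀ + μ * Breg ψ ψ' xs x₀ + ⟪A (x₁ - x₀), y₁ - yt⟫ := by
  have hgw : ∀ w, ConvexOn ℝ Y (fun z => g z - ⟪w, z⟫) := fun w =>
    hg.sub (((innerSL ℝ w) : Euc m →ₗ[ℝ] ℝ).concaveOn hY)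
  have hfA : ConvexOn ℝ X (fun z => f z + ⟪A z, yt⟫) :=
    hf.add (((innerSL ℝ yt).comp A).toLinearMap.convexOn hX) |>.congr fun z _ => by
      simp [real_inner_comm]
  have hyt₁ := breg_three_point (hφ _) (hgw _) hytmin hyt hy₁
  have hy₁s := breg_three_point (hφ _) (hgw _) hy₁min hy₁ hys
  have hx₁s := breg_three_point (hψ _) hfA hx₁min hx₁ hxs
  simp only [Lag] at hsaddle
  simp only [map_sub, inner_sub_left, inner_sub_right]
  linarith

theorem spida_residual_summability_general {n m : ℕ}
    (X : Set (Euc n)) (Y : Set (Euc m))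
    (hXcv : Convex ℝ X)
    (hYcv : Convex ℝ Y)
    (f : Euc n → ℝ) (g : Euc m → ℝ)
    (hf : ConvexOn ℝ Set.univ f)
    (hg : ConvexOn ℝ Set.univ g)
    (A : Euc n →L[ℝ] Euc m)
    (γ μ : ℝ) (hγ : 0 < γ) (hμ : 0 < μ)
    (φ : Euc m → ℝ) (φ' : Euc m → Euc m)
    (hφg : ∀ z, HasGradientAt φ (φ' z) z) (hφcv : ConvexOn ℝ Set.univ φ)
    (ψ : Euc n → ℝ) (ψ' : Euc n → Euc n)
    (hψg : ∀ z, HasGradientAt ψ (ψ' z) z) (hψcv : ConvexOn ℝ Set.univ ψ)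
    (x : ℕ → Euc n) (yt y : ℕ → Euc m)
    (hytmem : ∀ k, yt (k + 1) ∈ Y)
    (hytmax : ∀ k, ∀ z ∈ Y, -g z + ⟪A (x k), z⟫ - γ * Breg φ φ' z (y k) ≤
      -g (yt (k + 1)) + ⟪A (x k), yt (k + 1)⟫ - γ * Breg φ φ' (yt (k + 1)) (y k))
    (hxmem : ∀ k, x (k + 1) ∈ X)
    (hxmin : ∀ k, ∀ z ∈ X,
      f (x (k + 1)) + ⟪A (x (k + 1)), yt (k + 1)⟫ + μ * Breg ψ ψ' (x (k + 1)) (x k) ≤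
        f z + ⟪A z, yt (k + 1)⟫ + μ * Breg ψ ψ' z (x k))
    (hymem : ∀ k, y (k + 1) ∈ Y)
    (hymax : ∀ k, ∀ z ∈ Y, -g z + ⟪A (x (k + 1)), z⟫ - γ * Breg φ φ' z (y k) ≤
      -g (y (k + 1)) + ⟪A (x (k + 1)), y (k + 1)⟫ - γ * Breg φ φ' (y (k + 1)) (y k))
    (ϱ α : ℝ) (hϱ : 0 < ϱ) (hα : 0 < α)
    (hφsc : ConvexOn ℝ Set.univ (fun z => φ z - ϱ / 2 * ‖z‖ ^ 2))
    (φn : Euc n → ℝ) (φn' : Euc n → Euc n)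
    (hφng : ∀ z, HasGradientAt φn (φn' z) z)
    (hφnsc : ConvexOn ℝ Set.univ (fun z => φn z - ϱ / 2 * ‖z‖ ^ 2))
    (L0 : ℝ) (hL0pos : 0 < L0)
    (hL0le : L0 ≤ ϱ * μ / (α * ‖(ContinuousLinearMap.adjoint A).comp A‖))
    (hLψφ : ConvexOn ℝ Set.univ (fun z => L0 * ψ z - φn z))
    (xs : Euc n) (ys : Euc m) (hxs : xs ∈ X) (hys : ys ∈ Y)
    (hsaddle : ∀ xx ∈ X, ∀ yy ∈ Y,
      Lag f g A xs yy ≤ Lag f g A xs ys ∧ Lag f g A xs ys ≤ Lag f g A xx ys)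
    (Ψ : Euc n → ℝ) (Ψ' : Euc n → Euc n)
    (hΨ : Ψ = fun z =>
      ψ z - α * ‖(ContinuousLinearMap.adjoint A).comp A‖ / (ϱ * μ) * φn z)
    (hΨ' : Ψ' = fun z =>
      ψ' z - (α * ‖(ContinuousLinearMap.adjoint A).comp A‖ / (ϱ * μ)) • φn' z) :
    (∀ k, 0 ≤ Breg Ψ Ψ' (x (k + 1)) (x k)) ∧
      ∀ N : ℕ,
        ∑ k ∈ Finset.range (N + 1),
            (γ * Breg φ φ' (yt (k + 1)) (y k)
              + (γ - 1 / (α * ϱ)) * Breg φ φ' (y (k + 1)) (yt (k + 1))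
              + μ * Breg Ψ Ψ' (x (k + 1)) (x k)) ≤
          γ * Breg φ φ' ys (y 0) + μ * Breg ψ ψ' xs (x 0) := by
  set NA := ‖(ContinuousLinearMap.adjoint A).comp A‖
  have hφn : ConvexOn ℝ univ φn :=
    (strongConvexOn_iff_convex.mpr hφnsc).convexOn fun _ => by positivity
  have hΨg : ∀ z, HasGradientAt Ψ (Ψ' z) z := fun z =>
    hΨ ▸ hΨ' ▸ (hψg z).sub ((hφng z).const_mul _)
  have hΨcv : ConvexOn ℝ univ Ψ :=
    hΨ ▸ ConvexOn.sub_div_mul_of_le_div (by positivity) (by positivity) hL0pos hL0le hφn hLψφ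
  have hBΨ : ∀ a b, μ * Breg Ψ Ψ' a b = μ * Breg ψ ψ' a b - α * NA / ϱ * Breg φn φn' a b := by
    intro a b
    rw [hΨ, hΨ', breg_sub_const_mul]
    field_simp
  refine ⟨fun k => breg_nonneg hΨcv (hΨg _) _, fun N => ?_⟩
  have hD : 0 ≤ γ * Breg φ φ' ys (y (N + 1)) + μ * Breg ψ ψ' xs (x (N + 1)) :=
    add_nonneg (mul_nonneg hγ.le (breg_nonneg hφcv (hφg _) _))
      (mul_nonneg hμ.le (breg_nonneg hψcv (hψg _) _))
  refine (le_add_of_nonneg_right hD).trans (sum_range_add_le_of_add_le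
    (D := fun k => γ * Breg φ φ' ys (y k) + μ * Breg ψ ψ' xs (x k)) (fun k => ?_) (N + 1))
  have hstep := spida_step_le (γ := γ) (μ := μ) (x₀ := x k) (y₀ := y k) hXcv hYcv
    (hf.subset (subset_univ X) hXcv) (hg.subset (subset_univ Y) hYcv) hφg hψg
    (hxmem k) (hytmem k) (hymem k) hxs hys
    (isMinOn_iff.mpr fun z hz => by beta_reduce; linarith [hytmax k z hz])
    (isMinOn_iff.mpr fun z hz => by beta_reduce; linarith [hxmin k z hz])
    (isMinOn_iff.mpr fun z hz => by beta_reduce; linarith [hymax k z hz])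
    ((hsaddle _ (hxmem k) _ (hytmem k)).1.trans (hsaddle _ (hxmem k) _ (hytmem k)).2)
  have hcross := inner_apply_sub_le_breg A hα hϱ (hφg (yt (k + 1))) hφsc (hφng (x k)) hφnsc
    (x₁ := x (k + 1)) (y₁ := y (k + 1))
  linarith [hBΨ (x (k + 1)) (x k)]

/-- summability of the residual terms along the SPIDA sequence. -/
theorem spida_residual_summability {n m : ℕ}
    (X : Set (Euc n)) (Y : Set (Euc m))
    (hXne : X.Nonempty) (hXcl : IsClosed X) (hXcv : Convex ℝ X)
    (hYne : Y.Nonempty) (hYcl : IsClosed Y) (hYcv : Convex ℝ Y)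
    (f : Euc n → ℝ) (g : Euc m → ℝ)
    (hf : ConvexOn ℝ Set.univ f) (hflsc : LowerSemicontinuous f)
    (hg : ConvexOn ℝ Set.univ g) (hglsc : LowerSemicontinuous g)
    (A : Euc n →L[ℝ] Euc m)
    (γ μ : ℝ) (hγ : 0 < γ) (hμ : 0 < μ)
    (φ : Euc m → ℝ) (φ' : Euc m → Euc m)
    (hφg : ∀ z, HasGradientAt φ (φ' z) z) (hφcv : ConvexOn ℝ Set.univ φ)
    (ψ : Euc n → ℝ) (ψ' : Euc n → Euc n)
    (hψg : ∀ z, HasGradientAt ψ (ψ' z) z) (hψcv : ConvexOn ℝ Set.univ ψ)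
    (x : ℕ → Euc n) (yt y : ℕ → Euc m)
    (hx0 : x 0 ∈ X) (hy0 : y 0 ∈ Y)
    (hytmem : ∀ k, yt (k + 1) ∈ Y)
    (hytmax : ∀ k, ∀ z ∈ Y, -g z + ⟪A (x k), z⟫ - γ * Breg φ φ' z (y k) ≤
      -g (yt (k + 1)) + ⟪A (x k), yt (k + 1)⟫ - γ * Breg φ φ' (yt (k + 1)) (y k))
    (hxmem : ∀ k, x (k + 1) ∈ X)
    (hxmin : ∀ k, ∀ z ∈ X,
      f (x (k + 1)) + ⟪A (x (k + 1)), yt (k + 1)⟫ + μ * Breg ψ ψ' (x (k + 1)) (x k) ≤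
        f z + ⟪A z, yt (k + 1)⟫ + μ * Breg ψ ψ' z (x k))
    (hymem : ∀ k, y (k + 1) ∈ Y)
    (hymax : ∀ k, ∀ z ∈ Y, -g z + ⟪A (x (k + 1)), z⟫ - γ * Breg φ φ' z (y k) ≤
      -g (y (k + 1)) + ⟪A (x (k + 1)), y (k + 1)⟫ - γ * Breg φ φ' (y (k + 1)) (y k))
    (ϱ α : ℝ) (hϱ : 0 < ϱ) (hα : 0 < α)
    (hφsc : ConvexOn ℝ Set.univ (fun z => φ z - ϱ / 2 * ‖z‖ ^ 2))
    (hαϱγ : 1 ≤ α * ϱ * γ)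
    (φn : Euc n → ℝ) (φn' : Euc n → Euc n)
    (hφng : ∀ z, HasGradientAt φn (φn' z) z)
    (hφnsc : ConvexOn ℝ Set.univ (fun z => φn z - ϱ / 2 * ‖z‖ ^ 2))
    (L0 : ℝ) (hL0pos : 0 < L0)
    (hL0le : L0 ≤ ϱ * μ / (α * ‖(ContinuousLinearMap.adjoint A).comp A‖))
    (hLψφ : ConvexOn ℝ Set.univ (fun z => L0 * ψ z - φn z))
    (xs : Euc n) (ys : Euc m) (hxs : xs ∈ X) (hys : ys ∈ Y)
    (hsaddle : ∀ xx ∈ X, ∀ yy ∈ Y,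
      Lag f g A xs yy ≤ Lag f g A xs ys ∧ Lag f g A xs ys ≤ Lag f g A xx ys)
    (Ψ : Euc n → ℝ) (Ψ' : Euc n → Euc n)
    (hΨ : Ψ = fun z =>
      ψ z - α * ‖(ContinuousLinearMap.adjoint A).comp A‖ / (ϱ * μ) * φn z)
    (hΨ' : Ψ' = fun z =>
      ψ' z - (α * ‖(ContinuousLinearMap.adjoint A).comp A‖ / (ϱ * μ)) • φn' z) :
    (∀ k, 0 ≤ Breg Ψ Ψ' (x (k + 1)) (x k)) ∧
      ∀ N : ℕ,
        ∑ k ∈ Finset.range (N + 1),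
            (γ * Breg φ φ' (yt (k + 1)) (y k)
              + (γ - 1 / (α * ϱ)) * Breg φ φ' (y (k + 1)) (yt (k + 1))
              + μ * Breg Ψ Ψ' (x (k + 1)) (x k)) ≤
          γ * Breg φ φ' ys (y 0) + μ * Breg ψ ψ' xs (x 0) :=
  spida_residual_summability_general X Y hXcv hYcv f g hf hg A γ μ hγ hμ φ φ' hφg hφcv ψ ψ' hψg hψcv
    x yt y hytmem hytmax hxmem hxmin hymem hymax ϱ α hϱ hα hφsc φn φn' hφng hφnsc L0 hL0pos hL0le
    hLψφ xs ys hxs hys hsaddle Ψ Ψ' hΨ hΨ'
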